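/- Let γ ∈ (0,1), λ > 0, and suppose perturbations of trajectories satisfy ‖Δs_t‖ ≤ D e^{λ t} ε for all t ≥ 0 and also ‖Δs_t‖ ≤ M (uniform bound), with the reward R being L-Lipschitz. Then the difference of discounted returns satisfies |Σ_{t=0}^∞ γ^t R(s'_t) − Σ_{t=0}^∞ γ^t R(s_t)| ≤ K ε^{α} for α = −log γ / λ < 1, where K is a constant depending only on γ, λ, D, M, L (for ε sufficiently small). -/

import Mathlib

/-!
The divergence of the two trajectories is bounded by `min (D e^{λt} ε) M`. Split the discounted
sum at the time `T ≈ log (M / (D ε)) / λ` where the two bounds cross. Before `T` the terms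
`(γ e^λ)^t D ε` grow geometrically (since `α < 1` means `γ e^λ > 1`), so the head is of the size
of its last term, `≈ γ^T M`; after `T` the tail is `≤ M γ^T / (1 - γ)`. Finally
`γ^T = e^{T log γ} ≈ (D ε / M)^α`.
-/

open Real Finset

theorem abs_tsum_sub_le_tsum_of_abs_sub_le {ι : Type*} {f g b : ι → ℝ} (hf : Summable f)
    (hg : Summable g) (hb : Summable b) (h : ∀ i, |f i - g i| ≤ b i) :
    |∑' i, f i - ∑' i, g i| ≤ ∑' i, b i := by
  rw [← hf.tsum_sub hg]
  exact tsum_of_norm_bounded hb.hasSum fun i => (norm_eq_abs _).trans_le (h i)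

section Discounted

variable {γ M : ℝ}

theorem summable_pow_mul_min (hγ0 : 0 ≤ γ) (hγ1 : γ < 1) (hM : 0 ≤ M) {a : ℕ → ℝ}
    (ha : ∀ t, 0 ≤ a t) : Summable fun t => γ ^ t * min (a t) M :=
  ((summable_geometric_of_lt_one hγ0 hγ1).mul_right M).of_nonneg_of_le
    (fun t => mul_nonneg (pow_nonneg hγ0 t) (le_min (ha t) hM))
    (fun t => mul_le_mul_of_nonneg_left (min_le_right _ _) (pow_nonneg hγ0 t))

theorem tsum_pow_mul_min_le_sum_add (hγ0 : 0 ≤ γ) (hγ1 : γ < 1) (hM : 0 ≤ M) {a : ℕ → ℝ}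
    (ha : ∀ t, 0 ≤ a t) (T : ℕ) :
    ∑' t, γ ^ t * min (a t) M ≤ ∑ t ∈ range T, γ ^ t * a t + M * γ ^ T / (1 - γ) := by
  have hsum := summable_pow_mul_min hγ0 hγ1 hM ha
  rw [← hsum.sum_add_tsum_nat_add T]
  gcongr with t
  · exact min_le_left _ _
  · calc ∑' t, γ ^ (t + T) * min (a (t + T)) M
        ≤ ∑' t, M * γ ^ T * γ ^ t :=
          ((summable_nat_add_iff T).2 hsum).tsum_le_tsum
            (fun t => by
              rw [pow_add, mul_comm (M * _), mul_assoc, mul_comm (γ ^ T)]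
              gcongr
              exact min_le_right _ _)
            ((summable_geometric_of_lt_one hγ0 hγ1).mul_left _)
      _ = M * γ ^ T / (1 - γ) := by
          rw [tsum_mul_left, tsum_geometric_of_lt_one hγ0 hγ1, div_eq_mul_inv]

end Discounted

theorem sum_range_pow_mul_exp_le {γ lam c : ℝ} (hq : 1 < γ * exp lam) (hc : 0 ≤ c) (T : ℕ) :
    ∑ t ∈ range T, γ ^ t * (c * exp (lam * t)) ≤
      c * exp (lam * T) * γ ^ T / (γ * exp lam - 1) := by
  have hpow (t : ℕ) : (γ * exp lam) ^ t = γ ^ t * exp (lam * t) := by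
    rw [mul_pow, ← exp_nat_mul, mul_comm (t : ℝ)]
  calc ∑ t ∈ range T, γ ^ t * (c * exp (lam * t))
      = c * ∑ t ∈ range T, (γ * exp lam) ^ t := by
        rw [mul_sum]; congr 1 with t; rw [hpow]; ring
    _ = c * (((γ * exp lam) ^ T - 1) / (γ * exp lam - 1)) := by rw [geom_sum_eq hq.ne']
    _ ≤ c * ((γ * exp lam) ^ T / (γ * exp lam - 1)) := by
        gcongr
        linarith
    _ = c * exp (lam * T) * γ ^ T / (γ * exp lam - 1) := by rw [hpow]; ring

/-- The crossing time `T = ⌈log (M / c) / λ⌉`. -/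
theorem exists_crossing_time {γ lam c M : ℝ} (hγ0 : 0 < γ) (hγ1 : γ ≤ 1) (hlam : 0 < lam)
    (hc : 0 < c) (hcM : c ≤ M) :
    ∃ T : ℕ, c * exp (lam * T) ≤ exp lam * M ∧ γ ^ T ≤ (c / M) ^ (-log γ / lam) := by
  set T₀ := log (M / c) / lam
  have hT₀ : 0 ≤ T₀ := div_nonneg (log_nonneg ((one_le_div hc).2 hcM)) hlam.le
  have hlamT₀ : lam * T₀ = log (M / c) := mul_div_cancel₀ _ hlam.ne'
  refine ⟨⌈T₀⌉₊, ?_, ?_⟩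
  · have hT : lam * ⌈T₀⌉₊ ≤ lam + log (M / c) := by
      rw [← hlamT₀, ← mul_one_add, add_comm]
      exact mul_le_mul_of_nonneg_left (Nat.ceil_lt_add_one hT₀).le hlam.le
    calc c * exp (lam * ⌈T₀⌉₊) ≤ c * exp (lam + log (M / c)) := by gcongr
      _ = exp lam * M := by
          rw [exp_add, exp_log (div_pos (hc.trans_le hcM) hc)]; field_simp
  · have hlog : log (c / M) = -(lam * T₀) := by
      rw [hlamT₀, ← log_inv, inv_div]
    calc γ ^ ⌈T₀⌉₊ = exp (⌈T₀⌉₊ * log γ) := by rw [exp_nat_mul, exp_log hγ0]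
      _ ≤ exp (T₀ * log γ) := by
          exact exp_le_exp.2 <| mul_le_mul_of_nonpos_right (Nat.le_ceil _) (log_nonpos hγ0.le hγ1)
      _ = (c / M) ^ (-log γ / lam) := by
          rw [rpow_def_of_pos (div_pos hc (hc.trans_le hcM)), hlog]
          field_simp

theorem tsum_pow_mul_min_exp_le {γ lam c M : ℝ} (hγ0 : 0 < γ) (hγ1 : γ < 1) (hlam : 0 < lam)
    (hq : 1 < γ * exp lam) (hc : 0 < c) (hcM : c ≤ M) :
    ∑' t : ℕ, γ ^ t * min (c * exp (lam * t)) M ≤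
      M * (exp lam / (γ * exp lam - 1) + 1 / (1 - γ)) * (c / M) ^ (-log γ / lam) := by
  obtain ⟨T, hexpT, hγT⟩ := exists_crossing_time hγ0 hγ1.le hlam hc hcM
  have hM : 0 ≤ M := hc.le.trans hcM
  calc ∑' t : ℕ, γ ^ t * min (c * exp (lam * t)) M
      ≤ ∑ t ∈ range T, γ ^ t * (c * exp (lam * t)) + M * γ ^ T / (1 - γ) :=
        tsum_pow_mul_min_le_sum_add hγ0.le hγ1 hM (fun t => by positivity) T
    _ ≤ c * exp (lam * T) * γ ^ T / (γ * exp lam - 1) + M * γ ^ T / (1 - γ) := by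
        gcongr
        exact sum_range_pow_mul_exp_le hq hc.le T
    _ ≤ exp lam * M * γ ^ T / (γ * exp lam - 1) + M * γ ^ T / (1 - γ) := by gcongr
    _ = M * (exp lam / (γ * exp lam - 1) + 1 / (1 - γ)) * γ ^ T := by ring
    _ ≤ M * (exp lam / (γ * exp lam - 1) + 1 / (1 - γ)) * (c / M) ^ (-log γ / lam) := by
        gcongr

/-- Perturbation bound on discounted returns under exponential trajectory divergence:
the difference of discounted returns is `O(ε^α)` with `α = -log γ / λ`. -/
theorem discounted_return_holder {n : ℕ} (γ lam D M L : ℝ)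
    (hγ : γ ∈ Set.Ioo (0 : ℝ) 1) (hlam : 0 < lam) (hD : 0 < D) (hM : 0 < M) (hL : 0 < L)
    (hα : -Real.log γ / lam < 1) :
    ∃ K > 0, ∃ ε₀ > 0, ∀ ε : ℝ, 0 < ε → ε ≤ ε₀ →
      ∀ (s s' : ℕ → EuclideanSpace ℝ (Fin n)) (R : EuclideanSpace ℝ (Fin n) → ℝ),
        (∀ x y, |R x - R y| ≤ L * ‖x - y‖) →
        (∀ t : ℕ, ‖s' t - s t‖ ≤ D * Real.exp (lam * t) * ε) →
        (∀ t : ℕ, ‖s' t - s t‖ ≤ M) →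
        Summable (fun t : ℕ => γ ^ t * R (s t)) →
        Summable (fun t : ℕ => γ ^ t * R (s' t)) →
        |(∑' t : ℕ, γ ^ t * R (s' t)) - ∑' t : ℕ, γ ^ t * R (s t)| ≤
          K * ε ^ (-Real.log γ / lam) := by
  obtain ⟨hγ0, hγ1⟩ := hγ
  have hq : 1 < γ * exp lam := by
    rw [← exp_log hγ0, ← exp_add, one_lt_exp_iff]
    linarith [(div_lt_one hlam).1 hα]
  refine ⟨L * (M * (exp lam / (γ * exp lam - 1) + 1 / (1 - γ))) * (D / M) ^ (-log γ / lam),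
    by positivity, M / D, by positivity, ?_⟩
  intro ε hε hεD s s' R hR hexp hunif hs hs'
  have hDε : D * ε ≤ M := by rwa [le_div_iff₀' hD] at hεD
  have hpoint (t : ℕ) : |γ ^ t * R (s' t) - γ ^ t * R (s t)| ≤
      L * (γ ^ t * min (D * ε * exp (lam * t)) M) := by
    rw [← mul_sub, abs_mul, abs_of_nonneg (by positivity), mul_left_comm]
    gcongr
    refine (hR _ _).trans (mul_le_mul_of_nonneg_left (le_min ?_ (hunif t)) hL.le)
    rw [mul_right_comm]
    exact hexp t
  calc |(∑' t : ℕ, γ ^ t * R (s' t)) - ∑' t : ℕ, γ ^ t * R (s t)|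
      ≤ ∑' t : ℕ, L * (γ ^ t * min (D * ε * exp (lam * t)) M) :=
        abs_tsum_sub_le_tsum_of_abs_sub_le hs' hs
          ((summable_pow_mul_min hγ0.le hγ1 hM.le (fun t => by positivity)).mul_left L) hpoint
    _ ≤ L * (M * (exp lam / (γ * exp lam - 1) + 1 / (1 - γ)) * (D * ε / M) ^ (-log γ / lam)) := by
        rw [tsum_mul_left]
        gcongr
        exact tsum_pow_mul_min_exp_le hγ0 hγ1 hlam hq (by positivity) hDε
    _ = L * (M * (exp lam / (γ * exp lam - 1) + 1 / (1 - γ))) * (D / M) ^ (-log γ / lam) *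
          ε ^ (-log γ / lam) := by
        rw [mul_div_right_comm, mul_rpow (by positivity) hε.le]
        ring
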